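/- Fix integers M ≥ 1, s ≥ 0, a real P > 0 and α ∈ [0,1]. Let h_1, h_2,…,h_{s+1}, z be independent standard complex Gaussian vectors in ℂ^M. Then P( √P·‖h_1‖² + Re⟨√P·Σ_{i=2}^{s+1} h_i + z, h_1⟩ < α·√P·‖h_1‖² ) ≤ ( 1 + P(1−α)²/(Ps+1) )^{−M}. -/

import Mathlib

/-!
Chernoff bound: for `t ≥ 0` the misdetection event has probability at most `𝔼 exp (-t X)` with
`X = (1 - α) √P ‖h₁‖² + Re ⟨√P ∑ hᵢ + z, h₁⟩`. Given `h₁ = u`, the variable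
`Re ⟨√P ∑ hᵢ + z, u⟩` is a centred real Gaussian of variance `(P s + 1) ‖u‖² / 2`, so averaging
over interference and noise leaves `𝔼 exp (-c ‖h₁‖²)` with
`c = t (1 - α) √P - t² (P s + 1) / 4`, and each of the `2M` real coordinates of `h₁` contributes
a factor `(1 + c)^(-1/2)`. The optimal `t = 2 (1 - α) √P / (P s + 1)` gives
`c = P (1 - α)² / (P s + 1)`.
-/

open MeasureTheory ProbabilityTheory

/-- Standard complex Gaussian measure on `ℂ^M`: the `2M` real coordinates are
i.i.d. real Gaussian `N(0, 1/2)`. -/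
noncomputable def stdCGaussian (M : ℕ) : Measure (Fin M → ℂ) :=
  (Measure.pi fun _ : Fin M =>
    (gaussianReal 0 (1/2)).prod (gaussianReal 0 (1/2))).map
    (fun f i => ⟨(f i).1, (f i).2⟩)

/-- Complex inner product `⟨x, v⟩ = ∑ m, x m * conj (v m)`. -/
noncomputable def cip {M : ℕ} (x v : Fin M → ℂ) : ℂ :=
  ∑ m, x m * (starRingEnd ℂ) (v m)

/-- Squared Euclidean norm `‖v‖² = ∑ m, |v m|²`. -/
noncomputable def cnSq {M : ℕ} (v : Fin M → ℂ) : ℝ :=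
  ∑ m, Complex.normSq (v m)

/-- The standard normal tail function `Q`. -/
noncomputable def Qfun (x : ℝ) : ℝ :=
  ∫ t in Set.Ioi x, (Real.sqrt (2 * Real.pi))⁻¹ * Real.exp (-t ^ 2 / 2)

open Real
open scoped NNReal ENNReal

theorem measure_lt_le_lintegral_exp {Ω : Type*} [MeasurableSpace Ω] (μ : Measure Ω)
    {f g : Ω → ℝ} (hf : Measurable f) (hg : Measurable g) {t : ℝ} (ht : 0 ≤ t) :
    μ {ω | f ω < g ω} ≤ ∫⁻ ω, ENNReal.ofReal (exp (t * (g ω - f ω))) ∂μ := by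
  calc μ {ω | f ω < g ω}
      ≤ μ {ω | 1 ≤ ENNReal.ofReal (exp (t * (g ω - f ω)))} := by
        refine measure_mono fun ω hω => ?_
        simpa using mul_nonneg ht (sub_nonneg.mpr hω.le)
    _ ≤ ∫⁻ ω, ENNReal.ofReal (exp (t * (g ω - f ω))) ∂μ := by
        simpa using mul_meas_ge_le_lintegral₀
          (f := fun ω => ENNReal.ofReal (exp (t * (g ω - f ω)))) (μ := μ) (by fun_prop) 1

theorem lintegral_pi_prod_eq_prod {ι : Type*} [Fintype ι] {Ω : ι → Type*}
    [∀ i, MeasurableSpace (Ω i)] (μ : ∀ i, Measure (Ω i)) [∀ i, IsProbabilityMeasure (μ i)]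
    (f : ∀ i, Ω i → ℝ≥0∞) (hf : ∀ i, Measurable (f i)) :
    ∫⁻ ω, ∏ i, f i (ω i) ∂Measure.pi μ = ∏ i, ∫⁻ x, f i x ∂μ i := by
  rw [lintegral_prod_eq_prod_lintegral_of_indepFun _ _
    (iIndepFun_pi fun i => (hf i).aemeasurable) fun i => (hf i).comp (measurable_pi_apply i)]
  exact Finset.prod_congr rfl fun i _ => (measurePreserving_eval μ i).lintegral_comp (hf i)

theorem exp_mul_sub_mul_sq_eq {b : ℝ} (hb : b ≠ 0) (θ x : ℝ) :
    exp (θ * x - b * x ^ 2) = exp (θ ^ 2 / (4 * b)) * exp (-b * (x - θ / (2 * b)) ^ 2) := by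
  rw [← exp_add]
  congr 1
  field_simp
  ring

theorem integrable_exp_mul_sub_mul_sq {b : ℝ} (hb : 0 < b) (θ : ℝ) :
    Integrable fun x : ℝ => exp (θ * x - b * x ^ 2) := by
  simp_rw [exp_mul_sub_mul_sq_eq hb.ne']
  exact ((integrable_exp_neg_mul_sq hb).comp_sub_right _).const_mul _

theorem integral_exp_mul_sub_mul_sq {b : ℝ} (hb : 0 < b) (θ : ℝ) :
    ∫ x : ℝ, exp (θ * x - b * x ^ 2) = √(π / b) * exp (θ ^ 2 / (4 * b)) := by
  simp_rw [exp_mul_sub_mul_sq_eq hb.ne']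
  rw [integral_const_mul, integral_sub_right_eq_self (fun x => exp (-b * x ^ 2)),
    integral_gaussian, mul_comm]

theorem lintegral_exp_mul_sub_mul_sq_gaussianReal {v : ℝ≥0} (hv : v ≠ 0) (θ : ℝ) {c : ℝ}
    (hc : 0 ≤ c) :
    ∫⁻ x, ENNReal.ofReal (exp (θ * x - c * x ^ 2)) ∂gaussianReal 0 v
      = ENNReal.ofReal ((√(1 + 2 * v * c))⁻¹ * exp (v * θ ^ 2 / (2 * (1 + 2 * v * c)))) := by
  have hv' : (0 : ℝ) < v := by positivity
  set b : ℝ := c + (2 * (v : ℝ))⁻¹ with hb_def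
  have hb : 0 < b := by positivity
  have hdensity : ∀ x : ℝ, gaussianPDF 0 v x * ENNReal.ofReal (exp (θ * x - c * x ^ 2))
      = ENNReal.ofReal ((√(2 * π * v))⁻¹ * exp (θ * x - b * x ^ 2)) := by
    intro x
    rw [gaussianPDF, gaussianPDFReal, ← ENNReal.ofReal_mul (by positivity), mul_assoc,
      ← exp_add]
    congr 3
    rw [hb_def]
    field_simp
    ring
  rw [gaussianReal_of_var_ne_zero _ hv, lintegral_withDensity_eq_lintegral_mul _
    (measurable_gaussianPDF _ _) (by fun_prop)]
  simp only [Pi.mul_apply, hdensity]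
  rw [← ofReal_integral_eq_lintegral_ofReal ((integrable_exp_mul_sub_mul_sq hb θ).const_mul _)
    (Filter.Eventually.of_forall fun x => by positivity), integral_const_mul,
    integral_exp_mul_sub_mul_sq hb θ]
  have h1 : 1 + 2 * v * c = 2 * v * b := by rw [hb_def]; field_simp; ring
  rw [h1, ← mul_assoc, ← sqrt_inv, ← sqrt_mul (by positivity), ← sqrt_inv]
  congr 3
  · field_simp
  · field_simp; norm_num

theorem lintegral_exp_re_mul_conj_sub_normSq_gaussianReal_prod (w : ℂ) (θ : ℝ) {c : ℝ}
    (hc : 0 ≤ c) :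
    ∫⁻ p : ℝ × ℝ, ENNReal.ofReal (exp (θ * ((⟨p.1, p.2⟩ : ℂ) * (starRingEnd ℂ) w).re
        - c * Complex.normSq ⟨p.1, p.2⟩)) ∂(gaussianReal 0 (1/2)).prod (gaussianReal 0 (1/2))
      = ENNReal.ofReal ((1 + c)⁻¹ * exp (θ ^ 2 * Complex.normSq w / (4 * (1 + c)))) := by
  have hsplit : ∀ p : ℝ × ℝ,
      ENNReal.ofReal (exp (θ * ((⟨p.1, p.2⟩ : ℂ) * (starRingEnd ℂ) w).re
        - c * Complex.normSq ⟨p.1, p.2⟩))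
      = ENNReal.ofReal (exp (θ * w.re * p.1 - c * p.1 ^ 2))
        * ENNReal.ofReal (exp (θ * w.im * p.2 - c * p.2 ^ 2)) := by
    intro p
    rw [← ENNReal.ofReal_mul (exp_pos _).le, ← exp_add, Complex.normSq_mk]
    simp only [Complex.mul_re, Complex.conj_re, Complex.conj_im]
    ring_nf
  have h12 : ((1 / 2 : ℝ≥0) : ℝ) = 1 / 2 := by norm_num
  simp_rw [hsplit]
  rw [lintegral_prod_mul (f := fun x => ENNReal.ofReal (exp (θ * w.re * x - c * x ^ 2)))
      (g := fun y => ENNReal.ofReal (exp (θ * w.im * y - c * y ^ 2))) (by fun_prop) (by fun_prop),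
    lintegral_exp_mul_sub_mul_sq_gaussianReal (by norm_num) _ hc,
    lintegral_exp_mul_sub_mul_sq_gaussianReal (by norm_num) _ hc,
    ← ENNReal.ofReal_mul (by positivity), h12]
  have h1c : 0 < 1 + c := by linarith
  congr 1
  rw [Complex.normSq_apply]
  field_simp
  rw [mul_assoc, ← exp_add, sq_sqrt h1c.le]
  ring_nf

@[fun_prop]
theorem Measurable.complex_mk {α : Type*} [MeasurableSpace α] {f g : α → ℝ}
    (hf : Measurable f) (hg : Measurable g) : Measurable fun x => (⟨f x, g x⟩ : ℂ) :=
  Complex.measurableEquivRealProd.symm.measurable.comp (hf.prodMk hg)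

instance isProbabilityMeasure_stdCGaussian (M : ℕ) : IsProbabilityMeasure (stdCGaussian M) :=
  Measure.isProbabilityMeasure_map (by fun_prop)

@[fun_prop]
theorem Continuous.cip {α : Type*} [TopologicalSpace α] {M : ℕ} {f g : α → Fin M → ℂ}
    (hf : Continuous f) (hg : Continuous g) : Continuous fun x => cip (f x) (g x) := by
  unfold _root_.cip
  fun_prop

@[fun_prop]
theorem Continuous.cnSq {α : Type*} [TopologicalSpace α] {M : ℕ} {f : α → Fin M → ℂ}
    (hf : Continuous f) : Continuous fun x => cnSq (f x) := by
  unfold _root_.cnSq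
  fun_prop

theorem lintegral_exp_re_cip_sub_cnSq_stdCGaussian (M : ℕ) (v : Fin M → ℂ) (θ : ℝ) {c : ℝ}
    (hc : 0 ≤ c) :
    ∫⁻ x, ENNReal.ofReal (exp (θ * (cip x v).re - c * cnSq x)) ∂stdCGaussian M
      = ENNReal.ofReal (((1 + c) ^ M)⁻¹ * exp (θ ^ 2 * cnSq v / (4 * (1 + c)))) := by
  have hprod : ∀ f : Fin M → ℝ × ℝ,
      ENNReal.ofReal (exp (θ * (cip (fun m => ⟨(f m).1, (f m).2⟩) v).re
        - c * cnSq (fun m => ⟨(f m).1, (f m).2⟩)))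
      = ∏ m, ENNReal.ofReal (exp (θ * ((⟨(f m).1, (f m).2⟩ : ℂ) * (starRingEnd ℂ) (v m)).re
        - c * Complex.normSq ⟨(f m).1, (f m).2⟩)) := by
    intro f
    rw [← ENNReal.ofReal_prod_of_nonneg fun m _ => (exp_pos _).le, ← exp_sum, cip, cnSq,
      Complex.re_sum, Finset.mul_sum, Finset.mul_sum, Finset.sum_sub_distrib]
  rw [stdCGaussian, lintegral_map (by fun_prop) (by fun_prop)]
  simp_rw [hprod]
  rw [lintegral_pi_prod_eq_prod _ (fun m (p : ℝ × ℝ) => ENNReal.ofReal (exp (θ * ((⟨p.1, p.2⟩ : ℂ)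
    * (starRingEnd ℂ) (v m)).re - c * Complex.normSq ⟨p.1, p.2⟩))) (by fun_prop)]
  simp_rw [lintegral_exp_re_mul_conj_sub_normSq_gaussianReal_prod _ _ hc]
  rw [← ENNReal.ofReal_prod_of_nonneg fun m _ => by positivity, Finset.prod_mul_distrib,
    Finset.prod_const, Finset.card_univ, Fintype.card_fin, inv_pow, ← exp_sum, cnSq,
    Finset.mul_sum, Finset.sum_div]

theorem lintegral_exp_re_cip_stdCGaussian (M : ℕ) (v : Fin M → ℂ) (θ : ℝ) :
    ∫⁻ x, ENNReal.ofReal (exp (θ * (cip x v).re)) ∂stdCGaussian M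
      = ENNReal.ofReal (exp (θ ^ 2 * cnSq v / 4)) := by
  simpa using lintegral_exp_re_cip_sub_cnSq_stdCGaussian M v θ le_rfl

theorem lintegral_exp_neg_cnSq_stdCGaussian (M : ℕ) {c : ℝ} (hc : 0 ≤ c) :
    ∫⁻ x, ENNReal.ofReal (exp (-(c * cnSq x))) ∂stdCGaussian M
      = ENNReal.ofReal (((1 + c) ^ M)⁻¹) := by
  simpa using lintegral_exp_re_cip_sub_cnSq_stdCGaussian M 0 0 hc

theorem re_cip_smul_sum_add {M s : ℕ} (a : ℝ) (H : Fin s → Fin M → ℂ) (z u : Fin M → ℂ) :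
    (cip (fun m => a * ∑ i, H i m + z m) u).re = ∑ i, a * (cip (H i) u).re + (cip z u).re := by
  simp only [cip, add_mul, Finset.sum_add_distrib, Complex.add_re, mul_assoc, Finset.sum_mul,
    ← Finset.mul_sum, Complex.re_sum, Complex.re_ofReal_mul]
  rw [Finset.sum_comm]

theorem lintegral_exp_re_cip_smul_sum_add (M s : ℕ) (a θ : ℝ) (u : Fin M → ℂ) :
    ∫⁻ w, ENNReal.ofReal (exp (θ * (cip (fun m => a * ∑ i, w.1 i m + w.2 m) u).re))
        ∂(Measure.pi fun _ : Fin s => stdCGaussian M).prod (stdCGaussian M)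
      = ENNReal.ofReal (exp (θ ^ 2 * (a ^ 2 * s + 1) * cnSq u / 4)) := by
  have hsplit : ∀ w : (Fin s → Fin M → ℂ) × (Fin M → ℂ),
      ENNReal.ofReal (exp (θ * (cip (fun m => a * ∑ i, w.1 i m + w.2 m) u).re))
      = (∏ i, ENNReal.ofReal (exp (θ * a * (cip (w.1 i) u).re)))
        * ENNReal.ofReal (exp (θ * (cip w.2 u).re)) := by
    intro w
    rw [← ENNReal.ofReal_prod_of_nonneg fun i _ => (exp_pos _).le, ← exp_sum,
      ← ENNReal.ofReal_mul (exp_pos _).le, ← exp_add, re_cip_smul_sum_add, mul_add,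
      Finset.mul_sum]
    simp only [mul_assoc]
  simp_rw [hsplit]
  rw [lintegral_prod_mul
    (f := fun H : Fin s → Fin M → ℂ => ∏ i, ENNReal.ofReal (exp (θ * a * (cip (H i) u).re)))
    (g := fun z : Fin M → ℂ => ENNReal.ofReal (exp (θ * (cip z u).re)))
    (Finset.measurable_prod _ fun i _ => by fun_prop).aemeasurable (by fun_prop),
    lintegral_pi_prod_eq_prod _ (fun _ x => ENNReal.ofReal (exp (θ * a * (cip x u).re)))
      (by fun_prop)]
  simp_rw [lintegral_exp_re_cip_stdCGaussian]
  rw [Finset.prod_const, Finset.card_univ, Fintype.card_fin, ← ENNReal.ofReal_pow (exp_pos _).le,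
    ← exp_nat_mul, ← ENNReal.ofReal_mul (exp_pos _).le, ← exp_add]
  ring_nf

theorem matched_filter_misdetection_avg_general (M : ℕ)
    (s : ℕ) (P : ℝ) (hP : 0 < P) (α : ℝ) (hα1 : α ≤ 1) :
    ((stdCGaussian M).prod
      ((Measure.pi fun _ : Fin s => stdCGaussian M).prod (stdCGaussian M)))
      {ω : (Fin M → ℂ) × ((Fin s → Fin M → ℂ) × (Fin M → ℂ)) |
        Real.sqrt P * cnSq ω.1 +
          (cip (fun m => Real.sqrt P * (∑ i, ω.2.1 i m) + ω.2.2 m) ω.1).re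
          < α * Real.sqrt P * cnSq ω.1}
      ≤ ENNReal.ofReal (((1 + P * (1 - α) ^ 2 / (P * s + 1)) ^ M)⁻¹) := by
  set t := 2 * (1 - α) * √P / (P * s + 1)
  set c := P * (1 - α) ^ 2 / (P * s + 1)
  have ht : 0 ≤ t := div_nonneg (by have := sub_nonneg.mpr hα1; positivity) (by positivity)
  have hexponent : -(t * (1 - α) * √P) + t ^ 2 * (√P ^ 2 * s + 1) / 4 = -c := by
    simp only [t, c]
    field_simp
    rw [sq_sqrt hP.le]
    ring
  calc _ ≤ ∫⁻ ω, ENNReal.ofReal (exp (t * (α * √P * cnSq ω.1 - (√P * cnSq ω.1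
          + (cip (fun m => √P * ∑ i, ω.2.1 i m + ω.2.2 m) ω.1).re))))
          ∂(stdCGaussian M).prod ((Measure.pi fun _ : Fin s => stdCGaussian M).prod
            (stdCGaussian M)) :=
        measure_lt_le_lintegral_exp _ (by fun_prop) (by fun_prop) ht
    _ = ∫⁻ u, ∫⁻ w, ENNReal.ofReal (exp (-(t * (1 - α) * √P) * cnSq u))
          * ENNReal.ofReal (exp (-t * (cip (fun m => √P * ∑ i, w.1 i m + w.2 m) u).re))
          ∂(Measure.pi fun _ : Fin s => stdCGaussian M).prod (stdCGaussian M)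
          ∂stdCGaussian M := by
        rw [lintegral_prod _ (by fun_prop)]
        refine lintegral_congr fun u => lintegral_congr fun w => ?_
        rw [← ENNReal.ofReal_mul (exp_pos _).le, ← exp_add]
        ring_nf
    _ = ∫⁻ u, ENNReal.ofReal (exp (-(c * cnSq u))) ∂stdCGaussian M := by
        refine lintegral_congr fun u => ?_
        rw [lintegral_const_mul _ (by fun_prop), lintegral_exp_re_cip_smul_sum_add,
          ← ENNReal.ofReal_mul (exp_pos _).le, ← exp_add]
        congr 2
        linear_combination cnSq u * hexponent
    _ = _ := lintegral_exp_neg_cnSq_stdCGaussian M (by positivity)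

/-- Misdetection probability of the matched-filter detector with threshold
`α√P‖h₁‖²`, averaged over the Rayleigh-fading channel vector `h₁` of the user of
interest, conditioned on `s` colliding users:
`P(√P‖h₁‖² + Re⟨√P ∑ᵢ hᵢ + z, h₁⟩ < α√P‖h₁‖²) ≤ (1 + P(1−α)²/(Ps+1))^{−M}`. -/
theorem matched_filter_misdetection_avg (M : ℕ) (hM : 1 ≤ M)
    (s : ℕ) (P : ℝ) (hP : 0 < P) (α : ℝ) (hα0 : 0 ≤ α) (hα1 : α ≤ 1) :
    ((stdCGaussian M).prod
      ((Measure.pi fun _ : Fin s => stdCGaussian M).prod (stdCGaussian M)))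
      {ω : (Fin M → ℂ) × ((Fin s → Fin M → ℂ) × (Fin M → ℂ)) |
        Real.sqrt P * cnSq ω.1 +
          (cip (fun m => Real.sqrt P * (∑ i, ω.2.1 i m) + ω.2.2 m) ω.1).re
          < α * Real.sqrt P * cnSq ω.1}
      ≤ ENNReal.ofReal (((1 + P * (1 - α) ^ 2 / (P * s + 1)) ^ M)⁻¹) :=
  matched_filter_misdetection_avg_general M s P hP α hα1
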